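/- arXiv:0805.2277 — 2 statements merged into one kernel-verified Lean document; each statement's English description precedes it below -/
import Mathlib

section
/- Let G be the presented group ⟨γ, δ ∣ (γδ)² = (δγ)², (γδγ)² = 1⟩. Then G is isomorphic to the presented group ⟨u, v ∣ v² = 1, vu² = u²v⟩ via the map u ↦ δγ, v ↦ γδγ, and the commutator subgroup [G, G] is infinite cyclic; moreover, both u and v act on [G, G] by conjugation as multiplication by −1 (i.e., conjugation by u and by v inverts each element of [G, G]). -/
namespace Stmt

/-- The relators `(γδ)²((δγ)²)⁻¹` and `(γδγ)²` on generators `γ = 0`, `δ = 1`. -/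
def rels : Set (FreeGroup (Fin 2)) :=
  { (FreeGroup.of 0 * FreeGroup.of 1) ^ 2 * ((FreeGroup.of 1 * FreeGroup.of 0) ^ 2)⁻¹,
    (FreeGroup.of 0 * FreeGroup.of 1 * FreeGroup.of 0) ^ 2 }

/-- The group `G = ⟨γ, δ ∣ (γδ)² = (δγ)², (γδγ)² = 1⟩`. -/
abbrev G : Type := PresentedGroup rels

/-- The generator `γ` of `G`. -/
def γ : G := PresentedGroup.of 0

/-- The generator `δ` of `G`. -/
def δ : G := PresentedGroup.of 1

/-- The relators `v²` and `vu²(u²v)⁻¹` on generators `u = 0`, `v = 1`. -/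
def relsH : Set (FreeGroup (Fin 2)) :=
  { FreeGroup.of 1 ^ 2,
    FreeGroup.of 1 * FreeGroup.of 0 ^ 2 * (FreeGroup.of 0 ^ 2 * FreeGroup.of 1)⁻¹ }

/-- The group `H = ⟨u, v ∣ v² = 1, vu² = u²v⟩`. -/
abbrev H : Type := PresentedGroup relsH

end Stmt

open Stmt

namespace Aux

open scoped commutatorElement

/-! ### Generic facts -/

lemma mk_rel {α : Type*} {rels : Set (FreeGroup α)} {r : FreeGroup α} (h : r ∈ rels) :
    PresentedGroup.mk rels r = 1 :=
  (QuotientGroup.eq_one_iff _).2 (Subgroup.subset_normalClosure h)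

section Generic

variable {K : Type*} [Group K]

lemma conj_zpow' (g c : K) (k : ℤ) : g * c ^ k * g⁻¹ = (g * c * g⁻¹) ^ k := by
  have h := (map_zpow (MulAut.conj g) c k).symm
  simp only [MulAut.conj_apply] at h
  exact h.symm

lemma conj_comp (a b c : K) : (a * b) * c * (a * b)⁻¹ = a * (b * c * b⁻¹) * a⁻¹ := by
  simp [mul_assoc]

lemma conj_inv_of_conj {g c d : K} (h : g * c * g⁻¹ = d) : g⁻¹ * d * g = c := by
  rw [← h]; simp [mul_assoc]

lemma inv_conj_of_conj_inv {g c : K} (h : g * c * g⁻¹ = c⁻¹) : g⁻¹ * c * g = c⁻¹ := by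
  have h1 : g⁻¹ * c⁻¹ * g = c := conj_inv_of_conj h
  calc g⁻¹ * c * g = (g⁻¹ * c⁻¹ * g)⁻¹ := by simp [mul_assoc]
    _ = c⁻¹ := by rw [h1]

lemma conj_inv_eq_of_conj_inv {g c : K} (h : g * c * g⁻¹ = c⁻¹) : g * c⁻¹ * g⁻¹ = c := by
  calc g * c⁻¹ * g⁻¹ = (g * c * g⁻¹)⁻¹ := by simp [mul_assoc]
    _ = c := by rw [h, inv_inv]

lemma conj_u_comm (u v : K) (huv : u ^ 2 * v = v * u ^ 2) :
    u * (u * v * u⁻¹ * v⁻¹) * u⁻¹ = (u * v * u⁻¹ * v⁻¹)⁻¹ := by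
  have h1 : u * (u * v * u⁻¹ * v⁻¹) * u⁻¹ = u ^ 2 * v * (u⁻¹ * v⁻¹ * u⁻¹) := by
    simp [pow_two, mul_assoc]
  rw [h1, huv]
  simp [pow_two, mul_assoc]

lemma conj_v_comm (u v : K) (hv : v * v = 1) :
    v * (u * v * u⁻¹ * v⁻¹) * v⁻¹ = (u * v * u⁻¹ * v⁻¹)⁻¹ := by
  have hvi : v⁻¹ = v := inv_eq_of_mul_eq_one_right hv
  have h1 : v * (u * v * u⁻¹ * v⁻¹) * v⁻¹ = v * u * v * u⁻¹ * (v * v)⁻¹ := by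
    simp [mul_assoc]
  rw [h1, hv, inv_one, mul_one,
    show (u * v * u⁻¹ * v⁻¹)⁻¹ = v * u * v⁻¹ * u⁻¹ from by simp [mul_assoc], hvi]

lemma mem_normalizer_zpowers {g c : K} (h1 : g * c * g⁻¹ ∈ Subgroup.zpowers c)
    (h2 : g⁻¹ * c * g ∈ Subgroup.zpowers c) : g ∈ Subgroup.normalizer (Subgroup.zpowers c : Set K) := by
  rw [Subgroup.mem_normalizer_iff]
  intro x
  constructor
  · intro hx
    obtain ⟨k, rfl⟩ := Subgroup.mem_zpowers_iff.mp hx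
    rw [conj_zpow']
    exact Subgroup.zpow_mem _ h1 k
  · intro hx
    obtain ⟨k, hk⟩ := Subgroup.mem_zpowers_iff.mp hx
    have h3 : g⁻¹ * c ^ k * g = (g⁻¹ * c * g) ^ k := by
      simpa using conj_zpow' g⁻¹ c k
    rw [← conj_inv_of_conj hk.symm, h3]
    exact Subgroup.zpow_mem _ h2 k

end Generic

/-! ### Relations in `G` -/

lemma relG1 : (γ * δ) ^ 2 = (δ * γ) ^ 2 := by
  have h := mk_rel (rels := rels)
    (r := (FreeGroup.of 0 * FreeGroup.of 1) ^ 2 * ((FreeGroup.of 1 * FreeGroup.of 0) ^ 2)⁻¹)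
    (Set.mem_insert _ _)
  simp only [map_mul, map_pow, map_inv] at h
  exact mul_inv_eq_one.mp h

lemma relG2 : (γ * δ * γ) ^ 2 = 1 := by
  have h := mk_rel (rels := rels)
    (r := (FreeGroup.of 0 * FreeGroup.of 1 * FreeGroup.of 0) ^ 2)
    (Set.mem_insert_of_mem _ rfl)
  simp only [map_mul, map_pow] at h
  exact h

lemma hvG : (γ * δ * γ) * (γ * δ * γ) = 1 := by
  have h := relG2; rwa [pow_two] at h

lemma huvG : (δ * γ) ^ 2 * (γ * δ * γ) = (γ * δ * γ) * (δ * γ) ^ 2 := by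
  calc (δ * γ) ^ 2 * (γ * δ * γ) = (γ * δ) ^ 2 * (γ * δ * γ) := by rw [relG1]
    _ = (γ * δ * γ) * (δ * γ) ^ 2 := by simp [pow_two, mul_assoc]

/-- The commutator `c = ⁅δγ, γδγ⁆` generating `[G,G]`. -/
def cG : G := (δ * γ) * (γ * δ * γ) * (δ * γ)⁻¹ * (γ * δ * γ)⁻¹

lemma conj_u_cG : (δ * γ) * cG * (δ * γ)⁻¹ = cG⁻¹ := conj_u_comm _ _ huvG

lemma conj_v_cG : (γ * δ * γ) * cG * (γ * δ * γ)⁻¹ = cG⁻¹ := conj_v_comm _ _ hvG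

lemma conj_γ_cG : γ * cG * γ⁻¹ = cG := by
  have hγ : γ = (γ * δ * γ) * (δ * γ)⁻¹ := by simp [mul_assoc]
  have h1 : γ * cG * γ⁻¹ =
      (γ * δ * γ) * ((δ * γ)⁻¹ * cG * ((δ * γ)⁻¹)⁻¹) * (γ * δ * γ)⁻¹ := by
    rw [← conj_comp (γ * δ * γ) (δ * γ)⁻¹ cG, ← hγ]
  rw [h1, inv_inv, inv_conj_of_conj_inv conj_u_cG]
  exact conj_inv_eq_of_conj_inv conj_v_cG

lemma conj_δ_cG : δ * cG * δ⁻¹ = cG⁻¹ := by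
  have hδ : δ = (δ * γ) ^ 2 * (γ * δ * γ)⁻¹ := by simp [pow_two, mul_assoc]
  have h1 : δ * cG * δ⁻¹ =
      (δ * γ) ^ 2 * ((γ * δ * γ)⁻¹ * cG * ((γ * δ * γ)⁻¹)⁻¹) * ((δ * γ) ^ 2)⁻¹ := by
    rw [← conj_comp ((δ * γ) ^ 2) (γ * δ * γ)⁻¹ cG, ← hδ]
  rw [h1, inv_inv, inv_conj_of_conj_inv conj_v_cG]
  have h2 : (δ * γ) ^ 2 * cG⁻¹ * ((δ * γ) ^ 2)⁻¹ =
      (δ * γ) * ((δ * γ) * cG⁻¹ * (δ * γ)⁻¹) * (δ * γ)⁻¹ := by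
    simp [pow_two, mul_assoc]
  rw [h2, conj_inv_eq_of_conj_inv conj_u_cG]
  exact conj_u_cG

/-! ### Normality of `⟨c⟩` and the commutator subgroup -/

lemma γ_mem_norm : γ ∈ Subgroup.normalizer (Subgroup.zpowers cG : Set G) :=
  mem_normalizer_zpowers
    (by rw [conj_γ_cG]; exact Subgroup.mem_zpowers _)
    (by rw [conj_inv_of_conj conj_γ_cG]; exact Subgroup.mem_zpowers _)

lemma δ_mem_norm : δ ∈ Subgroup.normalizer (Subgroup.zpowers cG : Set G) :=
  mem_normalizer_zpowers
    (by rw [conj_δ_cG]; exact Subgroup.inv_mem _ (Subgroup.mem_zpowers _))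
    (by rw [inv_conj_of_conj_inv conj_δ_cG]; exact Subgroup.inv_mem _ (Subgroup.mem_zpowers _))

lemma normal_zpowers_cG : (Subgroup.zpowers cG).Normal := by
  rw [← Subgroup.normalizer_eq_top_iff, eq_top_iff]
  intro x _
  refine PresentedGroup.generated_by rels _ ?_ x
  intro j
  fin_cases j
  · exact γ_mem_norm
  · exact δ_mem_norm

lemma commutator_γδ_mem : ⁅γ, δ⁆ ∈ Subgroup.zpowers cG := by
  have h : ⁅γ, δ⁆ = cG⁻¹ := by
    rw [commutatorElement_def, cG]
    simp [mul_assoc]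
  rw [h]
  exact Subgroup.inv_mem _ (Subgroup.mem_zpowers _)

lemma commutator_eq_zpowers : commutator G = Subgroup.zpowers cG := by
  have hN : (Subgroup.zpowers cG).Normal := normal_zpowers_cG
  refine le_antisymm ?_ ?_
  · set N := Subgroup.zpowers cG
    set π := QuotientGroup.mk' N with hπ
    have hker : ∀ z : G, π z = 1 ↔ z ∈ N := fun z => QuotientGroup.eq_one_iff z
    have hcommγδ : π γ * π δ = π δ * π γ := by
      have h := (hker _).mpr commutator_γδ_mem
      rw [map_commutatorElement] at h
      exact commutatorElement_eq_one_iff_commute.mp h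
    have hgen : ∀ y : G, π γ * π y = π y * π γ ∧ π δ * π y = π y * π δ := by
      intro y
      have hy : y ∈ Subgroup.comap π (Subgroup.centralizer {π γ, π δ}) := by
        refine PresentedGroup.generated_by rels _ ?_ y
        intro j
        fin_cases j
        · exact Subgroup.mem_comap.mpr (Subgroup.mem_centralizer_iff.mpr (by
            rintro h (rfl | rfl)
            · rfl
            · exact hcommγδ.symm))
        · exact Subgroup.mem_comap.mpr (Subgroup.mem_centralizer_iff.mpr (by
            rintro h (rfl | rfl)
            · exact hcommγδ
            · rfl))
      have hy' := Subgroup.mem_centralizer_iff.mp (Subgroup.mem_comap.mp hy)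
      exact ⟨hy' _ (Or.inl rfl), hy' _ (Or.inr rfl)⟩
    have hcent : ∀ x : G, π x ∈ Subgroup.center (G ⧸ N) := by
      intro x
      rw [Subgroup.mem_center_iff]
      intro b
      obtain ⟨y, rfl⟩ := QuotientGroup.mk'_surjective N b
      have hx : x ∈ Subgroup.comap π (Subgroup.centralizer {π y}) := by
        refine PresentedGroup.generated_by rels _ ?_ x
        intro j
        fin_cases j
        · exact Subgroup.mem_comap.mpr (Subgroup.mem_centralizer_iff.mpr
            (by rintro h rfl; exact (hgen y).1.symm))
        · exact Subgroup.mem_comap.mpr (Subgroup.mem_centralizer_iff.mpr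
            (by rintro h rfl; exact (hgen y).2.symm))
      exact Subgroup.mem_centralizer_iff.mp (Subgroup.mem_comap.mp hx) _ rfl
    rw [commutator_def, Subgroup.commutator_le]
    intro g₁ _ g₂ _
    refine (hker _).mp ?_
    rw [map_commutatorElement]
    exact commutatorElement_eq_one_iff_commute.mpr
      ((Subgroup.mem_center_iff.mp (hcent g₁) (π g₂)).symm)
  · rw [Subgroup.zpowers_le, commutator_def]
    exact Subgroup.commutator_mem_commutator (Subgroup.mem_top _) (Subgroup.mem_top _)

/-! ### The representation into `Equiv.Perm ℤ` -/

def ρf : Fin 2 → Equiv.Perm ℤ := ![Equiv.subRight (1 : ℤ), Equiv.neg ℤ]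

lemma ρrels : ∀ r ∈ rels, FreeGroup.lift ρf r = 1 := by
  rintro r (rfl | rfl) <;>
  · simp only [map_mul, map_pow, map_inv, FreeGroup.lift_apply_of, ρf, Matrix.cons_val_zero,
      Matrix.cons_val_one, Matrix.head_cons]
    ext x
    simp [pow_two, Equiv.Perm.mul_apply, Equiv.Perm.inv_def, mul_inv_rev, Equiv.neg_symm]

noncomputable def ρ : G →* Equiv.Perm ℤ := PresentedGroup.toGroup ρrels

lemma ρ_γ : ρ γ = Equiv.subRight (1 : ℤ) := PresentedGroup.toGroup.of ρrels

lemma ρ_δ : ρ δ = Equiv.neg ℤ := PresentedGroup.toGroup.of ρrels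

lemma ρ_cG : ρ cG = Equiv.addRight (2 : ℤ) := by
  rw [cG]
  simp only [map_mul, map_inv, ρ_γ, ρ_δ]
  ext x
  simp [Equiv.Perm.mul_apply, Equiv.Perm.inv_def, mul_inv_rev, Equiv.neg_symm]
  try ring

lemma addRight_zpow (a : ℤ) : ∀ n : ℤ, (Equiv.addRight a) ^ n = Equiv.addRight (n * a) := by
  intro n
  induction n using Int.induction_on with
  | zero => ext x; simp
  | succ k ih =>
      rw [zpow_add, zpow_one, ih]
      ext x
      simp [Equiv.Perm.mul_apply]
      ring
  | pred k ih =>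
      rw [zpow_sub, zpow_one, ih]
      ext x
      simp [Equiv.Perm.mul_apply, Equiv.Perm.inv_def]
      ring

lemma cG_zpow_injective : Function.Injective fun n : ℤ => cG ^ n := by
  intro m n h
  have h2 : (ρ cG) ^ m = (ρ cG) ^ n := by
    rw [← map_zpow, ← map_zpow]
    simpa using congrArg ρ h
  rw [ρ_cG, addRight_zpow, addRight_zpow] at h2
  have h3 : (0 : ℤ) + m * 2 = 0 + n * 2 := by
    simpa using Equiv.ext_iff.mp h2 0
  omega

/-! ### The isomorphism `[G,G] ≃* ℤ` -/

noncomputable def zpowersEquiv : Multiplicative ℤ ≃* Subgroup.zpowers cG := by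
  refine MulEquiv.ofBijective
    ((zpowersHom G cG).codRestrict (Subgroup.zpowers cG) fun n => ?_) ⟨?_, ?_⟩
  · exact Subgroup.mem_zpowers_iff.mpr ⟨n.toAdd, rfl⟩
  · intro a b hab
    have h2 : cG ^ a.toAdd = cG ^ b.toAdd := by
      simpa [zpowersHom_apply] using congrArg Subtype.val hab
    exact Multiplicative.toAdd.injective (cG_zpow_injective h2)
  · rintro ⟨g, hg⟩
    obtain ⟨k, hk⟩ := Subgroup.mem_zpowers_iff.mp hg
    exact ⟨Multiplicative.ofAdd k, Subtype.ext (by simpa [zpowersHom_apply] using hk)⟩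

noncomputable def commutatorEquivInt : (commutator G) ≃* Multiplicative ℤ :=
  (MulEquiv.subgroupCongr commutator_eq_zpowers).trans zpowersEquiv.symm

/-! ### The isomorphism `H ≃* G` -/

def fHG : H →* G :=
  PresentedGroup.toGroup (f := ![δ * γ, γ * δ * γ]) (by
    rintro r (rfl | rfl) <;>
      simp only [map_mul, map_pow, map_inv, FreeGroup.lift_apply_of, Matrix.cons_val_zero,
        Matrix.cons_val_one, Matrix.head_cons]
    · exact relG2
    · rw [huvG]
      simp [mul_assoc])

def gGH : G →* H :=
  PresentedGroup.toGroup
    (f := ![(PresentedGroup.of 1 : H) * (PresentedGroup.of 0 : H)⁻¹,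
      (PresentedGroup.of 0 : H) ^ 2 * (PresentedGroup.of 1 : H)⁻¹]) (by
    have relH1 : (PresentedGroup.of 1 : H) ^ 2 = 1 := by
      have h := mk_rel (rels := relsH) (r := FreeGroup.of 1 ^ 2) (Set.mem_insert _ _)
      simp only [map_pow] at h
      exact h
    have relH2 : (PresentedGroup.of 1 : H) * (PresentedGroup.of 0 : H) ^ 2 =
        (PresentedGroup.of 0 : H) ^ 2 * (PresentedGroup.of 1 : H) := by
      have h := mk_rel (rels := relsH)
        (r := FreeGroup.of 1 * FreeGroup.of 0 ^ 2 * (FreeGroup.of 0 ^ 2 * FreeGroup.of 1)⁻¹)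
        (Set.mem_insert_of_mem _ rfl)
      simp only [map_mul, map_pow, map_inv] at h
      exact mul_inv_eq_one.mp h
    rintro r (rfl | rfl) <;>
      simp only [map_mul, map_pow, map_inv, FreeGroup.lift_apply_of, Matrix.cons_val_zero,
        Matrix.cons_val_one, Matrix.head_cons]
    · set u : H := PresentedGroup.of 0 with hu
      set v : H := PresentedGroup.of 1 with hv
      have e1 : (v * u⁻¹ * (u ^ 2 * v⁻¹)) ^ 2 = v * u ^ 2 * v⁻¹ := by
        simp [pow_two, mul_assoc]
      have e2 : (u ^ 2 * v⁻¹ * (v * u⁻¹)) ^ 2 = u ^ 2 := by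
        simp [pow_two, mul_assoc]
      rw [e1, e2, relH2]
      simp [mul_assoc]
    · set u : H := PresentedGroup.of 0 with hu
      set v : H := PresentedGroup.of 1 with hv
      have e3 : (v * u⁻¹ * (u ^ 2 * v⁻¹) * (v * u⁻¹)) ^ 2 = v ^ 2 := by
        simp [pow_two, mul_assoc]
      rw [e3, relH1])

lemma gf_id : gGH.comp fHG = MonoidHom.id H := by
  ext i
  fin_cases i <;>
  · simp only [MonoidHom.comp_apply, MonoidHom.id_apply, fHG, gGH, γ, δ, Fin.mk_zero, Fin.mk_one,
      Fin.isValue, PresentedGroup.toGroup.of, map_mul, map_inv, Matrix.cons_val_zero,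
      Matrix.cons_val_one, Matrix.head_cons]
    simp [pow_two, mul_assoc]

lemma fg_id : fHG.comp gGH = MonoidHom.id G := by
  ext i
  fin_cases i <;>
  · simp only [MonoidHom.comp_apply, MonoidHom.id_apply, fHG, gGH, Fin.mk_zero, Fin.mk_one,
      Fin.isValue, PresentedGroup.toGroup.of, map_mul, map_inv, map_pow, Matrix.cons_val_zero,
      Matrix.cons_val_one, Matrix.head_cons, γ, δ]
    simp [pow_two, mul_assoc]

def eHG : H ≃* G := MonoidHom.toMulEquiv fHG gGH gf_id fg_id

lemma eHG_of0 : eHG (PresentedGroup.of 0) = δ * γ := by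
  show fHG (PresentedGroup.of 0) = δ * γ
  simp [fHG, PresentedGroup.toGroup.of]

lemma eHG_of1 : eHG (PresentedGroup.of 1) = γ * δ * γ := by
  show fHG (PresentedGroup.of 1) = γ * δ * γ
  simp [fHG, PresentedGroup.toGroup.of]

end Aux

open Aux

/-- `G = ⟨γ, δ ∣ (γδ)² = (δγ)², (γδγ)² = 1⟩` is isomorphic to
`⟨u, v ∣ v² = 1, vu² = u²v⟩` via `u ↦ δγ`, `v ↦ γδγ`; its commutator subgroup is
infinite cyclic, and conjugation by the images of `u` and of `v` inverts every
element of the commutator subgroup. -/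
theorem stmt18 :
    (∃ e : H ≃* G, e (PresentedGroup.of 0) = δ * γ ∧
        e (PresentedGroup.of 1) = γ * δ * γ) ∧
    Nonempty ((commutator G) ≃* Multiplicative ℤ) ∧
    (∀ x : G, x ∈ commutator G →
      (δ * γ) * x * (δ * γ)⁻¹ = x⁻¹ ∧
      (γ * δ * γ) * x * (γ * δ * γ)⁻¹ = x⁻¹) := by
  refine ⟨⟨eHG, eHG_of0, eHG_of1⟩, ⟨commutatorEquivInt⟩, ?_⟩
  intro x hx
  rw [commutator_eq_zpowers] at hx
  obtain ⟨k, rfl⟩ := Subgroup.mem_zpowers_iff.mp hx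
  constructor
  · calc (δ * γ) * cG ^ k * (δ * γ)⁻¹ = ((δ * γ) * cG * (δ * γ)⁻¹) ^ k := conj_zpow' _ _ _
      _ = (cG⁻¹) ^ k := by rw [conj_u_cG]
      _ = (cG ^ k)⁻¹ := inv_zpow cG k
  · calc (γ * δ * γ) * cG ^ k * (γ * δ * γ)⁻¹ = ((γ * δ * γ) * cG * (γ * δ * γ)⁻¹) ^ k :=
        conj_zpow' _ _ _
      _ = (cG⁻¹) ^ k := by rw [conj_v_cG]
      _ = (cG ^ k)⁻¹ := inv_zpow cG k
end

section
/- Let G be the presented group ⟨γ, δ ∣ (γδ)² = (δγ)², (γδγ)² = 1⟩. Then for every integer n ≥ 3 there exists a surjective group homomorphism from G onto the dihedral group of order 2n. -/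
/-- For every `n ≥ 3` the group `G = ⟨γ, δ ∣ (γδ)² = (δγ)², (γδγ)² = 1⟩` surjects
onto the dihedral group of order `2n`. -/
theorem stmt19 : ∀ n : ℕ, 3 ≤ n →
    ∃ φ : Stmt.G →* DihedralGroup n, Function.Surjective φ := by
  intro n hn
  haveI : NeZero n := ⟨by omega⟩
  set f : Fin 2 → DihedralGroup n := ![DihedralGroup.r 1, DihedralGroup.sr 0] with hf
  have h : ∀ r ∈ Stmt.rels, FreeGroup.lift f r = 1 := by
    intro r hr
    rcases hr with h | h <;> subst h
    · rw [map_mul, map_inv, mul_inv_eq_one]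
      simp [hf, DihedralGroup.r_mul_sr, DihedralGroup.sr_mul_r, DihedralGroup.sr_mul_sr,
        DihedralGroup.r_mul_r, pow_two, mul_assoc]
    · simp [hf, DihedralGroup.r_mul_sr, DihedralGroup.sr_mul_r, DihedralGroup.sr_mul_sr,
        DihedralGroup.r_mul_r, DihedralGroup.one_def, pow_two, mul_assoc, -DihedralGroup.r_zero]
  refine ⟨PresentedGroup.toGroup h, ?_⟩
  intro x
  have h0 : PresentedGroup.toGroup h (PresentedGroup.of 0) = DihedralGroup.r 1 :=
    PresentedGroup.toGroup.of h
  have h1 : PresentedGroup.toGroup h (PresentedGroup.of 1) = DihedralGroup.sr 0 :=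
    PresentedGroup.toGroup.of h
  match x with
  | DihedralGroup.r i =>
    refine ⟨(PresentedGroup.of 0) ^ i.val, ?_⟩
    simp [h0, DihedralGroup.r_one_pow, ZMod.natCast_val, ZMod.cast_id]
  | DihedralGroup.sr i =>
    refine ⟨PresentedGroup.of 1 * (PresentedGroup.of 0) ^ i.val, ?_⟩
    simp [h0, h1, DihedralGroup.r_one_pow, DihedralGroup.sr_mul_r,
      ZMod.natCast_val, ZMod.cast_id]
end
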